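/- For any squarefree positive integer n, any real κ ≥ 0, and any N > 1, the identity (log n / log N)·κ^{ω(n)} + (log n / log N)·κ^{ω(n)−1} = Σ_{d | n} μ(d)·τ_{1+κ}(n/d)·((log n)/(log N) − (log d)/(log N)) holds, with the convention 0^0 = 1. -/

import Mathlib

open ArithmeticFunction

/-- The divisor-type function `τ_r`, multiplicative with `τ_r(p^m) = Γ(r+m)/(Γ(r)·m!)`. -/
noncomputable def tauR (r : ℝ) : ArithmeticFunction ℝ :=
  ⟨fun n => if n = 0 then 0 else ∏ p ∈ n.primeFactors,
      Real.Gamma (r + (n.factorization p : ℝ)) /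
        (Real.Gamma r * Nat.factorial (n.factorization p)),
    by simp⟩

/-- The Möbius function, real-valued. -/
noncomputable def muR : ArithmeticFunction ℝ :=
  ((moebius : ArithmeticFunction ℤ) : ArithmeticFunction ℝ)

/-- The constant-one function (on `n ≥ 1`), real-valued. -/
noncomputable def zetaR : ArithmeticFunction ℝ :=
  ((zeta : ArithmeticFunction ℕ) : ArithmeticFunction ℝ)

/-! Writing the squarefree `n` as the product of its set `P` of prime factors, divisors `d`
correspond to subsets `t ⊆ P`, with `μ(d) = (-1)^|t|`, `τ_{1+κ}(n/d) = (1+κ)^|P \ t|` and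
`log n - log d = ∑_{p ∈ P \ t} log p`. Exchanging the sums, the coefficient of `log p` is
`(1+κ) ∑_{t ⊆ P \ {p}} (-1)^|t| (1+κ)^|P \ {p} \ t| = (1+κ) κ^(ω(n)-1)`
by the binomial theorem. -/

open Finset

namespace Finset

variable {ι R : Type*} [DecidableEq ι] [CommRing R]

theorem sum_powerset_neg_one_pow_mul_pow_card_sdiff (s : Finset ι) (a : R) :
    ∑ t ∈ s.powerset, (-1) ^ #t * a ^ #(s \ t) = (a - 1) ^ #s := by
  simpa [← prod_const, sub_eq_neg_add] using (prod_add (fun _ ↦ (-1 : R)) (fun _ ↦ a) s).symm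

theorem sum_powerset_neg_one_pow_mul_pow_card_sdiff_mul_sum_sdiff (s : Finset ι) (a : R)
    (w : ι → R) :
    ∑ t ∈ s.powerset, (-1) ^ #t * a ^ #(s \ t) * ∑ i ∈ s \ t, w i
      = (∑ i ∈ s, w i) * a * (a - 1) ^ (#s - 1) := by
  calc ∑ t ∈ s.powerset, (-1) ^ #t * a ^ #(s \ t) * ∑ i ∈ s \ t, w i
      = ∑ i ∈ s, ∑ t ∈ (s.erase i).powerset, (-1) ^ #t * a ^ #(s \ t) * w i := by
        simp_rw [mul_sum]
        refine sum_comm' fun t i ↦ ?_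
        simp only [mem_powerset, mem_sdiff, subset_erase]
        tauto
    _ = ∑ i ∈ s, w i * a * (a - 1) ^ (#s - 1) := by
        refine sum_congr rfl fun i hi ↦ ?_
        rw [← card_erase_of_mem hi, ← sum_powerset_neg_one_pow_mul_pow_card_sdiff, mul_sum]
        refine sum_congr rfl fun t ht ↦ ?_
        have hit : i ∉ t := fun h ↦ by simpa using mem_powerset.mp ht h
        have hcard : #(s \ t) = #(s.erase i \ t) + 1 := by
          rw [erase_sdiff_comm, card_erase_of_mem (mem_sdiff.mpr ⟨hi, hit⟩),
            Nat.sub_add_cancel (card_pos.mpr ⟨i, mem_sdiff.mpr ⟨hi, hit⟩⟩)]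
        rw [hcard, pow_succ]
        ring
    _ = (∑ i ∈ s, w i) * a * (a - 1) ^ (#s - 1) := by rw [sum_mul, sum_mul]

end Finset

namespace Nat

theorem sum_divisors_eq_sum_powerset_primeFactors {α : Type*} [AddCommMonoid α] {n : ℕ}
    (hn : Squarefree n) (f : ℕ → α) :
    ∑ d ∈ n.divisors, f d = ∑ t ∈ n.primeFactors.powerset, f (∏ p ∈ t, p) := by
  rw [← divisors_filter_squarefree_of_squarefree hn, sum_divisors_filter_squarefree hn.ne_zero,
    factors_eq, List.toFinset_coe, toFinset_factors]
  simp only [Finset.prod_val, id]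

end Nat

theorem ArithmeticFunction.cardDistinctFactors_eq_card_primeFactors (n : ℕ) :
    cardDistinctFactors n = #n.primeFactors := by
  rw [cardDistinctFactors_apply, ← Nat.toFinset_factors, List.card_toFinset]

theorem ArithmeticFunction.moebius_prod_primes {s : Finset ℕ} (hs : ∀ p ∈ s, p.Prime) :
    moebius (∏ p ∈ s, p) = (-1) ^ #s := by
  rw [isMultiplicative_moebius.map_prod_of_prime s hs,
    prod_congr rfl fun p hp ↦ moebius_apply_prime (hs p hp), prod_const]

theorem tauR_apply_of_squarefree {r : ℝ} (hr : 0 < r) {m : ℕ} (hm : Squarefree m) :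
    tauR r m = r ^ #m.primeFactors := by
  simp only [tauR, coe_mk, if_neg hm.ne_zero]
  rw [← prod_const]
  refine prod_congr rfl fun p hp ↦ ?_
  rw [Nat.factorization_eq_one_of_squarefree hm (Nat.prime_of_mem_primeFactors hp)
      (Nat.dvd_of_mem_primeFactors hp), Nat.cast_one, Real.Gamma_add_one hr.ne',
    Nat.factorial_one, Nat.cast_one, mul_one,
    mul_div_cancel_right₀ _ (Real.Gamma_pos_of_pos hr).ne']

theorem Real.log_natCast_prod {s : Finset ℕ} (hs : ∀ p ∈ s, p ≠ 0) :
    Real.log (∏ p ∈ s, p : ℕ) = ∑ p ∈ s, Real.log p := by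
  push_cast
  exact Real.log_prod fun p hp ↦ Nat.cast_ne_zero.mpr (hs p hp)

theorem sum_divisors_moebius_mul_tauR_mul_log_sub {n : ℕ} (hn : Squarefree n) {κ : ℝ}
    (hκ : 0 ≤ κ) :
    ∑ d ∈ n.divisors, (moebius d : ℝ) * tauR (1 + κ) (n / d) * (Real.log n - Real.log d)
      = Real.log n * (1 + κ) * κ ^ (cardDistinctFactors n - 1) := by
  set P := n.primeFactors
  have hprime : ∀ p ∈ P, p.Prime := fun p ↦ Nat.prime_of_mem_primeFactors
  have hlogn : Real.log n = ∑ p ∈ P, Real.log p := by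
    rw [← Real.log_natCast_prod fun p hp ↦ (hprime p hp).ne_zero,
      Nat.prod_primeFactors_of_squarefree hn]
  have hterm : ∀ t ∈ P.powerset,
      (moebius (∏ p ∈ t, p) : ℝ) * tauR (1 + κ) (n / ∏ p ∈ t, p)
          * (Real.log n - Real.log (∏ p ∈ t, p : ℕ))
        = (-1) ^ #t * (1 + κ) ^ #(P \ t) * ∑ p ∈ P \ t, Real.log p := by
    intro t ht
    have ht : t ⊆ P := mem_powerset.mp ht
    have htprime : ∀ p ∈ t, p.Prime := fun p hp ↦ hprime p (ht hp)
    rw [moebius_prod_primes htprime, ← Nat.prod_primeFactors_sdiff_of_squarefree hn ht,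
      tauR_apply_of_squarefree (by linarith)
        (hn.squarefree_of_dvd (prod_dvd_prod_of_subset _ _ _ sdiff_subset |>.trans
          (Nat.prod_primeFactors_of_squarefree hn).dvd)),
      Nat.primeFactors_prod fun p hp ↦ hprime p (mem_sdiff.mp hp).1,
      Real.log_natCast_prod fun p hp ↦ (htprime p hp).ne_zero, hlogn, sum_sdiff_eq_sub ht]
    push_cast
    ring
  rw [Nat.sum_divisors_eq_sum_powerset_primeFactors hn, sum_congr rfl hterm,
    sum_powerset_neg_one_pow_mul_pow_card_sdiff_mul_sum_sdiff, ← hlogn, add_sub_cancel_left,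
    cardDistinctFactors_eq_card_primeFactors]

theorem stmt4_general (n : ℕ) (hn : Squarefree n) (κ : ℝ) (hκ : 0 ≤ κ) (N : ℝ) :
    (Real.log n / Real.log N) * κ ^ (cardDistinctFactors n)
      + (Real.log n / Real.log N) * κ ^ (cardDistinctFactors n - 1)
    = ∑ d ∈ n.divisors, (moebius d : ℝ) * tauR (1 + κ) (n / d) *
        (Real.log n / Real.log N - Real.log d / Real.log N) := by
  simp_rw [← sub_div, ← mul_div_assoc, ← sum_div,
    sum_divisors_moebius_mul_tauR_mul_log_sub hn hκ]
  rcases Nat.eq_zero_or_pos (cardDistinctFactors n) with hω | hω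
  · -- `ω n - 1` truncates when `ω n = 0`, but then `n = 1` and `log n = 0`
    have hn1 : n = 1 := by
      have := cardDistinctFactors_eq_zero.mp hω
      have := hn.ne_zero
      omega
    simp [hn1]
  · obtain ⟨k, hk⟩ := Nat.exists_eq_add_of_lt hω
    rw [hk]
    simp only [zero_add, Nat.add_sub_cancel, pow_succ]
    ring

theorem stmt4 (n : ℕ) (hn : Squarefree n) (κ : ℝ) (hκ : 0 ≤ κ) (N : ℝ) (hN : 1 < N) :
    (Real.log n / Real.log N) * κ ^ (cardDistinctFactors n)
      + (Real.log n / Real.log N) * κ ^ (cardDistinctFactors n - 1)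
    = ∑ d ∈ n.divisors, (moebius d : ℝ) * tauR (1 + κ) (n / d) *
        (Real.log n / Real.log N - Real.log d / Real.log N) :=
  stmt4_general n hn κ hκ N
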